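/- Let C be a coassociative counital K-coalgebra in which every element lies in a finite-dimensional subcoalgebra. Suppose given linear forms ε_n : C → K (n ∈ ℕ) such that for every nonzero finitely supported λ : ℕ →₀ K, the linear map σ_λ : C → C defined by σ_λ(x) = Σ_n λ_n (ε_n ⊗ id)(δ(x)) is injective. Then C = 0. -/

import Mathlib

/-!
Fix `x` and a finite-dimensional subspace `D ∋ x` with `δ(D) ⊆ D ⊗ D`. Each `σ_φ` maps `D` into
itself, so the infinitely many vectors `σ_{ε_n}(x)` lie in `D` and satisfy a nontrivial linear
relation `∑ λ_n σ_{ε_n}(x) = 0`. As `φ ↦ σ_φ` is linear, this says `σ_λ(x) = 0`, and injectivity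
of `σ_λ` forces `x = 0`.
-/

open TensorProduct

/-- The map (φ ⊗ id) ∘ δ : C → C associated to a linear form φ on a coalgebra C. -/
noncomputable def convAction (K C : Type*) [CommRing K] [AddCommGroup C] [Module K C]
    [Coalgebra K C] (φ : C →ₗ[K] K) : C →ₗ[K] C :=
  (TensorProduct.lid K C).toLinearMap ∘ₗ φ.rTensor C ∘ₗ Coalgebra.comul

section CommRing

variable {K C : Type*} [CommRing K] [AddCommGroup C] [Module K C] [Coalgebra K C]

variable (K C) in
noncomputable def convActionₗ : (C →ₗ[K] K) →ₗ[K] C →ₗ[K] C where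
  toFun := convAction K C
  map_add' φ ψ := by
    simp only [convAction, LinearMap.rTensor_add, LinearMap.comp_add, LinearMap.add_comp]
  map_smul' c φ := by
    simp only [convAction, LinearMap.rTensor_smul, LinearMap.comp_smul, LinearMap.smul_comp,
      RingHom.id_apply]

theorem convAction_finsuppSum {ι : Type*} (lam : ι →₀ K) (ε : ι → C →ₗ[K] K) (x : C) :
    convAction K C (lam.sum fun n c => c • ε n) x =
      lam.sum fun n c => c • convAction K C (ε n) x := by
  change (convActionₗ K C).flip x _ = _
  simp only [map_finsuppSum, map_smul]
  rfl

theorem convAction_mem_of_comul_mem {D : Submodule K C} {y : C}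
    (hy : Coalgebra.comul (R := K) y ∈ LinearMap.range (TensorProduct.map D.subtype D.subtype))
    (φ : C →ₗ[K] K) : convAction K C φ y ∈ D := by
  obtain ⟨z, hz⟩ := hy
  change TensorProduct.lid K C (φ.rTensor C (Coalgebra.comul y)) ∈ D
  rw [← hz]
  clear hz
  induction z using TensorProduct.induction_on with
  | zero => simp
  | tmul a b =>
    simp only [TensorProduct.map_tmul, LinearMap.rTensor_tmul, TensorProduct.lid_tmul]
    exact D.smul_mem _ b.2
  | add a b ha hb => simpa only [map_add] using D.add_mem ha hb

end CommRing

theorem Submodule.not_linearIndependent_of_forall_mem {ι K M : Type*} [Infinite ι]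
    [DivisionRing K] [AddCommGroup M] [Module K M] (D : Submodule K M) [FiniteDimensional K D]
    {v : ι → M} (hv : ∀ i, v i ∈ D) : ¬LinearIndependent K v := fun h =>
  Module.Finite.not_linearIndependent_of_infinite (fun i => (⟨v i, hv i⟩ : D))
    (h.of_comp D.subtype)

theorem stmt_6 (K C : Type*) [Field K] [AddCommGroup C] [Module K C] [Coalgebra K C]
    (hloc : ∀ x : C, ∃ D : Submodule K C, FiniteDimensional K D ∧ x ∈ D ∧
      ∀ y ∈ D, Coalgebra.comul (R := K) y ∈
        LinearMap.range (TensorProduct.map D.subtype D.subtype))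
    (ε : ℕ → (C →ₗ[K] K))
    (hinj : ∀ lam : ℕ →₀ K, lam ≠ 0 →
      Function.Injective (convAction K C (lam.sum fun n c => c • ε n))) :
    ∀ x : C, x = 0 := by
  intro x
  obtain ⟨D, hfin, hxD, hD⟩ := hloc x
  have hdep : ¬LinearIndependent K fun n => convAction K C (ε n) x :=
    D.not_linearIndependent_of_forall_mem fun n => convAction_mem_of_comul_mem (hD x hxD) (ε n)
  obtain ⟨lam, hrel, hlam⟩ := not_linearIndependent_iff_finsupp.mp hdep
  have hσx : convAction K C (lam.sum fun n c => c • ε n) x = 0 := by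
    rw [convAction_finsuppSum, hrel]
  exact hinj lam hlam (hσx.trans (map_zero _).symm)
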